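/- arXiv:0707.2849 — 2 statements merged into one kernel-verified Lean document; each statement's English description precedes it below -/
import Mathlib

section
/- Let p be an odd prime, h an integer, q ∈ ℤ_p with |q − 1|_p < 1, v ≥ 1 an integer, and z ∈ ℤ_p. Let (E_n^{(v)})_{n≥0} be the unique sequence in ℚ_p satisfying Σ_{j=0}^{v} C(v,j) q^{h j} Σ_{k=0}^{n} C(n,k) j^{n−k} E_k^{(v)} = 2^v · δ_{n,0} for all n ≥ 0, and set E_n^{(v)}(z) = Σ_{l=0}^{n} C(n,l) z^{n−l} E_l^{(v)}. Then for every n ≥ 0, the limit lim_{N→∞} Σ_{x_1=0}^{p^N−1} ⋯ Σ_{x_v=0}^{p^N−1} (−1)^{x_1+⋯+x_v} q^{h(x_1+⋯+x_v)} (z + x_1+⋯+x_v)^n exists in ℚ_p and equals E_n^{(v)}(z), the higher-order (h,q)-Euler polynomial at z. -/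
/-!
Put `Q = q ^ h`, `M = p ^ N` and `S_N g = ∑_{x ∈ [0, M)^v} (-Q)^{|x|} g(|x|)`. In terms of
the shift `σ g = g (· + 1)` on sequences, `S_N g = ((∑_{a<M} (-Qσ)^a)^v g)(0)`, and since `M`
is odd the geometric sum gives `(∑_{a<M} (-Qσ)^a)(1 + Qσ) = 1 + Q^M σ^M`. Applied to
`g s = s^n` this says that the moments `S_N (s^k)` satisfy the defining recurrence of the `E_k`
with right-hand side `∑_j C(v,j) Q^{jM} (jM)^n`, which tends to `2^v δ_{n,0}` because
`Q^{p^N} → 1` and `p^N → 0`. The recurrence is triangular with diagonal `(1 + Q)^v ≠ 0`, so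
`S_N (s^k) → E_k` by induction on `k`, and the binomial expansion of `(z + s)^n` gives the
theorem.
-/

open Finset Filter Topology Polynomial

section FermionicSum

variable {K : Type*} [CommRing K]

def seqShift : Module.End K (ℕ → K) := LinearMap.funLeft K K (· + 1)

theorem seqShift_apply (g : ℕ → K) (s : ℕ) : seqShift g s = g (s + 1) := rfl

theorem seqShift_pow_apply (n : ℕ) (g : ℕ → K) (s : ℕ) :
    (seqShift ^ n) g s = g (s + n) := by
  induction n generalizing s with
  | zero => rfl
  | succ n ih =>
    rw [pow_succ', Module.End.mul_apply, seqShift_apply, ih, add_right_comm, add_assoc]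

theorem aeval_seqShift_C_mul_X_pow_apply (c : K) (n : ℕ) (g : ℕ → K) (s : ℕ) :
    aeval seqShift (C c * X ^ n) g s = c * g (s + n) := by
  simp [Module.algebraMap_end_apply, seqShift_pow_apply]

theorem aeval_seqShift_one_add_pow_apply (c : K) (M v : ℕ) (g : ℕ → K) (s : ℕ) :
    aeval seqShift ((1 + C c * X ^ M) ^ v) g s =
      ∑ j ∈ range (v + 1), v.choose j * c ^ j * g (s + j * M) := by
  have hexp : (1 + C c * X ^ M) ^ v =
      ∑ j ∈ range (v + 1), C (v.choose j * c ^ j) * X ^ (j * M) := by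
    rw [add_comm, add_pow]
    refine sum_congr rfl fun j _ => ?_
    simp only [one_pow, mul_one, C_mul, C_pow, map_natCast, mul_pow, pow_mul]
    ring
  simp only [hexp, map_sum, LinearMap.sum_apply, Finset.sum_apply,
    aeval_seqShift_C_mul_X_pow_apply]

def fermionicSum (T : K) (v M : ℕ) (g : ℕ → K) : K :=
  ∑ x : Fin v → Fin M, T ^ (∑ j, (x j : ℕ)) * g (∑ j, (x j : ℕ))

theorem fermionicSum_eq_aeval_seqShift (T : K) (v M : ℕ) (g : ℕ → K) :
    fermionicSum T v M g = aeval seqShift ((∑ a ∈ range M, (C T * X) ^ a) ^ v) g 0 := by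
  have hexp : (∑ a ∈ range M, (C T * X) ^ a) ^ v =
      ∑ x : Fin v → Fin M, C (T ^ (∑ j, (x j : ℕ))) * X ^ (∑ j, (x j : ℕ)) := by
    rw [← Fin.sum_univ_eq_sum_range, ← Fin.prod_const, Fintype.prod_sum]
    simp only [mul_pow, prod_mul_distrib, prod_pow_eq_pow_sum, C_pow]
  simp only [hexp, fermionicSum, map_sum, LinearMap.sum_apply, Finset.sum_apply,
    aeval_seqShift_C_mul_X_pow_apply, zero_add]

theorem fermionicSum_sum_mul {ι : Type*} (T : K) (v M : ℕ) (S : Finset ι) (c : ι → K)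
    (f : ι → ℕ → K) :
    fermionicSum T v M (fun s => ∑ i ∈ S, c i * f i s) =
      ∑ i ∈ S, c i * fermionicSum T v M (f i) := by
  simp only [fermionicSum, mul_sum]
  rw [sum_comm]
  exact sum_congr rfl fun _ _ => sum_congr rfl fun _ _ => by ring

theorem fermionicSum_add_pow (T y : K) (v M n : ℕ) :
    fermionicSum T v M (fun s => ((s : K) + y) ^ n) =
      ∑ k ∈ range (n + 1),
        n.choose k * y ^ (n - k) * fermionicSum T v M (fun s => (s : K) ^ k) := by
  rw [← fermionicSum_sum_mul]
  congr 1
  funext s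
  rw [add_pow]
  exact sum_congr rfl fun _ _ => by ring

theorem fermionicSum_aeval_one_add_pow {Q : K} {M : ℕ} (hM : Odd M) (v : ℕ) (g : ℕ → K) :
    fermionicSum (-Q) v M (aeval seqShift ((1 + C Q * X) ^ v) g) =
      aeval seqShift ((1 + C (Q ^ M) * X ^ M) ^ v) g 0 := by
  have hgeom : (∑ a ∈ range M, (C (-Q) * X) ^ a) * (1 + C Q * X) = 1 + C (Q ^ M) * X ^ M := by
    have := geom_sum_mul_neg (C (-Q) * X) M
    rw [mul_pow, ← C_pow, hM.neg_pow, C_neg, C_neg] at this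
    simpa only [neg_mul, sub_neg_eq_add, C_neg] using this
  rw [fermionicSum_eq_aeval_seqShift, ← Module.End.mul_apply, ← map_mul, ← mul_pow, hgeom]

theorem sum_choose_mul_fermionicSum_pow {Q : K} {M : ℕ} (hM : Odd M) (v n : ℕ) :
    ∑ j ∈ range (v + 1), v.choose j * Q ^ j *
        ∑ k ∈ range (n + 1), n.choose k * (j : K) ^ (n - k) *
          fermionicSum (-Q) v M (fun s => (s : K) ^ k) =
      ∑ j ∈ range (v + 1), v.choose j * (Q ^ M) ^ j * ((j * M : ℕ) : K) ^ n := by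
  simp_rw [← fermionicSum_add_pow]
  rw [← fermionicSum_sum_mul]
  have hshift : aeval seqShift ((1 + C Q * X) ^ v) (fun s => (s : K) ^ n) =
      fun s : ℕ => ∑ j ∈ range (v + 1), v.choose j * Q ^ j * ((s : K) + j) ^ n := by
    funext s
    simpa using aeval_seqShift_one_add_pow_apply Q 1 v (fun s => (s : K) ^ n) s
  rw [← hshift, fermionicSum_aeval_one_add_pow hM, aeval_seqShift_one_add_pow_apply]
  simp only [zero_add]

end FermionicSum

section Recurrence

variable {K : Type*} [CommRing K]

def eulerCoeff (Q : K) (v n k : ℕ) : K :=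
  n.choose k * ∑ j ∈ range (v + 1), v.choose j * Q ^ j * (j : K) ^ (n - k)

theorem sum_eulerCoeff_mul (Q : K) (v n : ℕ) (a : ℕ → K) :
    ∑ k ∈ range (n + 1), eulerCoeff Q v n k * a k =
      ∑ j ∈ range (v + 1), v.choose j * Q ^ j *
        ∑ k ∈ range (n + 1), n.choose k * (j : K) ^ (n - k) * a k := by
  simp only [eulerCoeff, mul_sum, sum_mul]
  rw [sum_comm]
  exact sum_congr rfl fun _ _ => sum_congr rfl fun _ _ => by ring

theorem eulerCoeff_self (Q : K) (v n : ℕ) : eulerCoeff Q v n n = (1 + Q) ^ v := by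
  simp [eulerCoeff, add_comm 1 Q, add_pow, mul_comm]

theorem tendsto_sum_choose_mul_pow_mul_cast_pow [TopologicalSpace K] [IsTopologicalRing K]
    {ι : Type*} {l : Filter ι} {c : ι → K} {m : ι → ℕ} (hc : Tendsto c l (𝓝 1))
    (hm : Tendsto (fun i => (m i : K)) l (𝓝 0)) (v n : ℕ) :
    Tendsto (fun i => ∑ j ∈ range (v + 1), v.choose j * c i ^ j * ((j * m i : ℕ) : K) ^ n) l
      (𝓝 (2 ^ v * if n = 0 then 1 else 0)) := by
  have hlim := tendsto_finsetSum (range (v + 1)) fun j _ =>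
    ((hc.pow j).const_mul (v.choose j : K)).mul ((hm.const_mul (j : K)).pow n)
  convert hlim using 2
  · push_cast; rfl
  · simp only [one_pow, mul_one, mul_zero, zero_pow_eq, ← sum_mul, ← Nat.cast_sum,
      Nat.sum_range_choose, Nat.cast_pow, Nat.cast_ofNat]

end Recurrence

section Triangular

variable {K : Type*} [DivisionRing K] [TopologicalSpace K] [IsTopologicalRing K] {ι : Type*}
  {l : Filter ι}

theorem tendsto_of_tendsto_triangular_sum {c : ℕ → ℕ → K} (hc : ∀ n, c n n ≠ 0)
    {a : ι → ℕ → K} {b : ℕ → K}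
    (h : ∀ n, Tendsto (fun i => ∑ k ∈ range (n + 1), c n k * a i k) l
      (𝓝 (∑ k ∈ range (n + 1), c n k * b k))) (n : ℕ) :
    Tendsto (fun i => a i n) l (𝓝 (b n)) := by
  induction n using Nat.strong_induction_on with
  | _ n ih =>
    have hlower : Tendsto (fun i => ∑ k ∈ range n, c n k * a i k) l
        (𝓝 (∑ k ∈ range n, c n k * b k)) :=
      tendsto_finsetSum _ fun k hk => (ih k (mem_range.1 hk)).const_mul _
    have := ((h n).sub hlower).const_mul (c n n)⁻¹
    simpa only [sum_range_succ, add_sub_cancel_left, ← mul_assoc, inv_mul_cancel₀ (hc n),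
      one_mul] using this

end Triangular

section PadicLimits

variable {p : ℕ} [Fact p.Prime]

theorem PadicInt.tendsto_pow_prime_pow {x : ℤ_[p]} (hx : ‖x - 1‖ < 1) :
    Tendsto (fun N => x ^ p ^ N) atTop (𝓝 1) := by
  have hp : Tendsto (fun N => (p : ℤ_[p]) ^ (N + 1)) atTop (𝓝 0) :=
    (tendsto_pow_atTop_nhds_zero_of_norm_lt_one ((norm_lt_one_iff_dvd _).2 dvd_rfl)).comp
      (tendsto_add_atTop_nat 1)
  rw [tendsto_iff_norm_sub_tendsto_zero]
  refine squeeze_zero_norm (fun N => ?_) (tendsto_norm_zero.comp hp)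
  obtain ⟨y, hy⟩ := dvd_sub_pow_of_dvd_sub ((norm_lt_one_iff_dvd _).1 hx) N
  rw [one_pow] at hy
  rw [norm_norm, Function.comp_apply, hy, norm_mul]
  exact mul_le_of_le_one_right (norm_nonneg _) y.norm_le_one

theorem Padic.tendsto_zpow_pow_prime_pow {q : ℤ_[p]} (hq : ‖q - 1‖ < 1) (h : ℤ) :
    Tendsto (fun N => ((q : ℚ_[p]) ^ h) ^ p ^ N) atTop (𝓝 1) := by
  have hq' : Tendsto (fun N => (q : ℚ_[p]) ^ p ^ N) atTop (𝓝 1) := by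
    rw [tendsto_iff_norm_sub_tendsto_zero]
    simpa [PadicInt.norm_def] using
      tendsto_iff_norm_sub_tendsto_zero.1 (PadicInt.tendsto_pow_prime_pow hq)
  simpa [← zpow_natCast, ← zpow_mul, mul_comm h] using hq'.zpow₀ h (Or.inl one_ne_zero)

end PadicLimits

theorem one_add_ne_zero_of_tendsto_pow_odd {K : Type*} [CommRing K] [TopologicalSpace K]
    [T2Space K] [NeZero (2 : K)] {ι : Type*} {l : Filter ι} [l.NeBot] {m : ι → ℕ}
    (hm : ∀ i, Odd (m i)) {Q : K} (hQ : Tendsto (fun i => Q ^ m i) l (𝓝 1)) : 1 + Q ≠ 0 := by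
  intro hQ1
  obtain rfl : Q = -1 := by linear_combination hQ1
  have hneg : (fun i => (-1 : K) ^ m i) = fun _ => -1 := funext fun i => (hm i).neg_one_pow
  rw [hneg, tendsto_const_nhds_iff] at hQ
  exact two_ne_zero (α := K) (by linear_combination -hQ)

theorem witt_formula_higher_order_hq_euler_polynomials_general (p : ℕ) [Fact p.Prime] (hp : Odd p)
    (h : ℤ) (q : ℤ_[p]) (hq : ‖q - 1‖ < 1) (v : ℕ) (z : ℤ_[p]) (E : ℕ → ℚ_[p])
    (hE : ∀ n : ℕ,
      (∑ j ∈ Finset.range (v + 1), (v.choose j : ℚ_[p]) * ((q : ℚ_[p]) ^ h) ^ j *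
        ∑ k ∈ Finset.range (n + 1), (n.choose k : ℚ_[p]) * (j : ℚ_[p]) ^ (n - k) * E k)
        = 2 ^ v * if n = 0 then 1 else 0) :
    ∀ n : ℕ, Filter.Tendsto
      (fun N : ℕ => ∑ x : Fin v → Fin (p ^ N),
        (-1 : ℚ_[p]) ^ (∑ j, (x j : ℕ)) * ((q : ℚ_[p]) ^ h) ^ (∑ j, (x j : ℕ)) *
          ((z : ℚ_[p]) + ((∑ j, (x j : ℕ) : ℕ) : ℚ_[p])) ^ n)
      Filter.atTop
      (nhds (∑ l ∈ Finset.range (n + 1),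
        (n.choose l : ℚ_[p]) * (z : ℚ_[p]) ^ (n - l) * E l)) := by
  set Q : ℚ_[p] := (q : ℚ_[p]) ^ h
  have hQ : Tendsto (fun N => Q ^ p ^ N) atTop (𝓝 1) := Padic.tendsto_zpow_pow_prime_pow hq h
  have hpN : Tendsto (fun N => ((p ^ N : ℕ) : ℚ_[p])) atTop (𝓝 0) := by
    simpa using tendsto_pow_atTop_nhds_zero_of_norm_lt_one (Padic.norm_p_lt_one (p := p))
  have hdiag : (1 + Q) ^ v ≠ 0 :=
    pow_ne_zero _ (one_add_ne_zero_of_tendsto_pow_odd (fun _ => hp.pow) hQ)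
  have hmoments : ∀ k, Tendsto (fun N => fermionicSum (-Q) v (p ^ N) (fun s => (s : ℚ_[p]) ^ k))
      atTop (𝓝 (E k)) := by
    refine tendsto_of_tendsto_triangular_sum (c := eulerCoeff Q v)
      (fun n => (eulerCoeff_self Q v n).symm ▸ hdiag) fun n => ?_
    simp only [sum_eulerCoeff_mul, hE, sum_choose_mul_fermionicSum_pow hp.pow]
    exact tendsto_sum_choose_mul_pow_mul_cast_pow hQ hpN v n
  intro n
  refine (tendsto_finsetSum _ fun l _ => (hmoments l).const_mul _).congr fun N => ?_
  rw [← fermionicSum_add_pow, fermionicSum]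
  exact sum_congr rfl fun x _ => by rw [neg_pow, add_comm]

/-- Witt's formula for the higher-order `(h,q)`-Euler polynomials: for an odd prime `p`,
`h : ℤ`, `q ∈ ℤ_[p]` with `‖q - 1‖ < 1`, `v ≥ 1` and `z ∈ ℤ_[p]`, with `E` the
higher-order `(h,q)`-Euler numbers (determined by
`Σ_{j≤v} C(v,j) q^{hj} Σ_{k≤n} C(n,k) j^{n-k} E_k = 2^v δ_{n,0}`) and
`E_n(z) = Σ_{l≤n} C(n,l) z^{n-l} E_l`, the `v`-fold fermionic `p`-adic integral
`lim_N Σ_{x₁,…,x_v < p^N} (-1)^{Σxⱼ} q^{h Σxⱼ} (z + Σxⱼ)^n` equals `E_n(z)`. -/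
theorem witt_formula_higher_order_hq_euler_polynomials (p : ℕ) [Fact p.Prime] (hp : Odd p)
    (h : ℤ) (q : ℤ_[p]) (hq : ‖q - 1‖ < 1) (v : ℕ) (hv : 1 ≤ v) (z : ℤ_[p]) (E : ℕ → ℚ_[p])
    (hE : ∀ n : ℕ,
      (∑ j ∈ Finset.range (v + 1), (v.choose j : ℚ_[p]) * ((q : ℚ_[p]) ^ h) ^ j *
        ∑ k ∈ Finset.range (n + 1), (n.choose k : ℚ_[p]) * (j : ℚ_[p]) ^ (n - k) * E k)
        = 2 ^ v * if n = 0 then 1 else 0) :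
    ∀ n : ℕ, Filter.Tendsto
      (fun N : ℕ => ∑ x : Fin v → Fin (p ^ N),
        (-1 : ℚ_[p]) ^ (∑ j, (x j : ℕ)) * ((q : ℚ_[p]) ^ h) ^ (∑ j, (x j : ℕ)) *
          ((z : ℚ_[p]) + ((∑ j, (x j : ℕ) : ℕ) : ℚ_[p])) ^ n)
      Filter.atTop
      (nhds (∑ l ∈ Finset.range (n + 1),
        (n.choose l : ℚ_[p]) * (z : ℚ_[p]) ^ (n - l) * E l)) :=
  witt_formula_higher_order_hq_euler_polynomials_general p hp h q hq v z E hE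
end

section
/- Let K be a field of characteristic zero, h an integer, q a nonzero element of K with q^h ≠ −1, v ≥ 1 an integer, and y_1, y_2, …, y_v ∈ K. Then for every n ≥ 0, the complete sum of products formula holds: E_{n,q}^{(h,v)}(y_1 + y_2 + ⋯ + y_v) = Σ_{l_1,…,l_v ≥ 0, l_1+⋯+l_v = n} (n choose l_1,…,l_v) · Π_{j=1}^{v} E_{l_j,q}^{(h)}(y_j), where (n choose l_1,…,l_v) = n!/(l_1!⋯l_v!) is the multinomial coefficient. -/
/-!
Put `D = q^h e^t + 1`. The defining identities give, in the domain `K⟦t⟧`,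
`D^v · Σ E^{(h,v)}_n(y₁+⋯+y_v) tⁿ/n! = 2^v e^{t(y₁+⋯+y_v)} = ∏ⱼ 2 e^{t yⱼ}`
`= D^v · ∏ⱼ Σ E^{(h)}_n(yⱼ) tⁿ/n!`.
Since `D ≠ 0`, it cancels, and the coefficient of `tⁿ` in a product of exponential generating
functions is the multinomial convolution of their coefficient sequences.
-/

open PowerSeries Finset
open scoped Nat

-- Its constant coefficient `c + 1` and its linear coefficient `c` cannot both vanish.
theorem PowerSeries.C_mul_exp_add_one_ne_zero {A : Type*} [CommRing A] [Algebra ℚ A]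
    [Nontrivial A] (c : A) : C c * exp A + 1 ≠ 0 := by
  intro h
  have h₀ : c + 1 = 0 := by simpa using congrArg constantCoeff h
  have h₁ : c = 0 := by simpa [coeff_exp] using congrArg (coeff 1) h
  simp [h₁] at h₀

theorem PowerSeries.prod_rescale_exp {A ι : Type*} [CommRing A] [Algebra ℚ A]
    (s : Finset ι) (y : ι → A) :
    ∏ i ∈ s, rescale (y i) (exp A) = rescale (∑ i ∈ s, y i) (exp A) := by
  classical
  induction s using Finset.induction_on with
  | empty => simp [constantCoeff_exp]
  | insert a s ha ih => rw [prod_insert ha, sum_insert ha, ih, exp_mul_exp_eq_exp_add]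

theorem Finset.piAntidiag_univ_eq_filter_piFinset {ι : Type*} [Fintype ι] [DecidableEq ι]
    (n : ℕ) : piAntidiag univ n =
      (Fintype.piFinset fun _ : ι => range (n + 1)).filter (fun l => ∑ i, l i = n) := by
  ext l
  simp only [mem_piAntidiag, mem_univ, implies_true, and_true, mem_filter,
    Fintype.mem_piFinset, mem_range, iff_and_self]
  rintro rfl i
  exact Nat.lt_succ_of_le (single_le_sum (fun j _ => Nat.zero_le (l j)) (mem_univ i))

theorem Finset.sum_finsuppAntidiag_eq_sum_piAntidiag {ι μ M : Type*} [DecidableEq ι]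
    [AddCommMonoid μ] [HasAntidiagonal μ] [DecidableEq μ] [AddCommMonoid M]
    (s : Finset ι) (n : μ) (f : (ι → μ) → M) :
    ∑ l ∈ finsuppAntidiag s n, f l = ∑ l ∈ piAntidiag s n, f l := by
  rw [finsuppAntidiag, sum_map]
  exact sum_attach (piAntidiag s n) f

namespace PowerSeries

variable {K : Type*} [Field K]

def egf (a : ℕ → K) : K⟦X⟧ := mk fun n => a n / n !

theorem coeff_egf (a : ℕ → K) (n : ℕ) : coeff n (egf a) = a n / n ! := coeff_mk _ _

variable [CharZero K]

theorem egf_injective : Function.Injective (egf : (ℕ → K) → K⟦X⟧) := by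
  intro a b hab
  funext n
  have := congrArg (coeff n) hab
  rwa [coeff_egf, coeff_egf, div_left_inj' (Nat.cast_ne_zero.2 n.factorial_ne_zero)] at this

theorem egf_pow (x : K) : egf (x ^ ·) = rescale x (exp K) := by
  ext n
  simp [coeff_egf, coeff_exp, div_eq_mul_inv]

theorem prod_egf {ι : Type*} [Fintype ι] [DecidableEq ι] (f : ι → ℕ → K) :
    ∏ i, egf (f i) =
      egf fun n => ∑ l ∈ piAntidiag univ n, (Nat.multinomial univ l : K) * ∏ i, f i (l i) := by
  ext n
  rw [coeff_prod,
    sum_finsuppAntidiag_eq_sum_piAntidiag univ n fun l => ∏ i, coeff (l i) (egf (f i)),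
    coeff_egf, sum_div]
  refine sum_congr rfl fun l hl => ?_
  rw [mem_piAntidiag] at hl
  have hfact : (n ! : K) = (∏ i, ((l i)! : K)) * Nat.multinomial univ l := by
    rw [← hl.1]; exact_mod_cast (Nat.multinomial_spec univ l).symm
  have hmult : (Nat.multinomial univ l : K) ≠ 0 := Nat.cast_ne_zero.2 (Nat.multinomial_pos _ _).ne'
  simp only [coeff_egf, prod_div_distrib, hfact, mul_comm (Nat.multinomial univ l : K)]
  rw [mul_div_mul_right _ _ hmult]

end PowerSeries

theorem complete_sum_products_hq_euler_polynomials_general (K : Type*) [Field K] [CharZero K]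
    (h : ℤ) (q : K) (v : ℕ)
    (y : Fin v → K) (E₁ Ev : K → ℕ → K)
    (hE₁ : ∀ x : K,
      (PowerSeries.C (R := K) (q ^ h) * PowerSeries.exp K + 1) *
          PowerSeries.mk (fun n => E₁ x n / n.factorial)
        = PowerSeries.C (R := K) 2 * PowerSeries.mk (fun n => x ^ n / n.factorial))
    (hEv : ∀ w : K,
      (PowerSeries.C (R := K) (q ^ h) * PowerSeries.exp K + 1) ^ v *
          PowerSeries.mk (fun n => Ev w n / n.factorial)
        = PowerSeries.C (R := K) (2 ^ v) * PowerSeries.mk (fun n => w ^ n / n.factorial)) :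
    ∀ n : ℕ, Ev (∑ j, y j) n =
      ∑ l ∈ (Fintype.piFinset fun _ : Fin v => Finset.range (n + 1)).filter
          (fun l => ∑ j, l j = n),
        (Nat.multinomial Finset.univ l : K) * ∏ j, E₁ (y j) (l j) := by
  set D := C (q ^ h) * exp K + 1
  have hE₁' (x : K) : D * egf (E₁ x) = C 2 * rescale x (exp K) := by rw [← egf_pow]; exact hE₁ x
  have hEv' (w : K) : D ^ v * egf (Ev w) = C (2 ^ v) * rescale w (exp K) := by
    rw [← egf_pow]; exact hEv w
  have hprod : egf (Ev (∑ j, y j)) = ∏ j, egf (E₁ (y j)) := by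
    refine mul_left_cancel₀ (pow_ne_zero v (C_mul_exp_add_one_ne_zero (q ^ h))) ?_
    calc D ^ v * egf (Ev (∑ j, y j))
        = ∏ j, C 2 * rescale (y j) (exp K) := by
          rw [hEv', prod_mul_distrib, prod_rescale_exp, prod_const, card_univ, Fintype.card_fin,
            map_pow]
      _ = ∏ j, D * egf (E₁ (y j)) := by simp only [hE₁']
      _ = D ^ v * ∏ j, egf (E₁ (y j)) := by
          rw [prod_mul_distrib, prod_const, card_univ, Fintype.card_fin]
  intro n
  rw [congrFun (egf_injective (hprod.trans (prod_egf _))) n, piAntidiag_univ_eq_filter_piFinset]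

/-- Complete sum of products of `(h,q)`-Euler polynomials. Over a field `K` of
characteristic zero, with `q ≠ 0`, `q^h ≠ -1` and `v ≥ 1`, let `E₁ x` be the
`(h,q)`-Euler polynomials (EGF via `(q^h e^t + 1) · Σ_n E₁ x n t^n/n! = 2 e^{tx}`)
and `Ev z` the higher-order ones (EGF via
`(q^h e^t + 1)^v · Σ_n Ev z n t^n/n! = 2^v e^{tz}`). Then for `y₁,…,y_v ∈ K`,
`Ev (y₁+⋯+y_v) n = Σ_{l₁+⋯+l_v=n} (n choose l₁,…,l_v) Π_j E₁ (y j) (l j)`. -/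
theorem complete_sum_products_hq_euler_polynomials (K : Type*) [Field K] [CharZero K]
    (h : ℤ) (q : K) (hq : q ≠ 0) (hqh : q ^ h ≠ -1) (v : ℕ) (hv : 1 ≤ v)
    (y : Fin v → K) (E₁ Ev : K → ℕ → K)
    (hE₁ : ∀ x : K,
      (PowerSeries.C (R := K) (q ^ h) * PowerSeries.exp K + 1) *
          PowerSeries.mk (fun n => E₁ x n / n.factorial)
        = PowerSeries.C (R := K) 2 * PowerSeries.mk (fun n => x ^ n / n.factorial))
    (hEv : ∀ w : K,
      (PowerSeries.C (R := K) (q ^ h) * PowerSeries.exp K + 1) ^ v *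
          PowerSeries.mk (fun n => Ev w n / n.factorial)
        = PowerSeries.C (R := K) (2 ^ v) * PowerSeries.mk (fun n => w ^ n / n.factorial)) :
    ∀ n : ℕ, Ev (∑ j, y j) n =
      ∑ l ∈ (Fintype.piFinset fun _ : Fin v => Finset.range (n + 1)).filter
          (fun l => ∑ j, l j = n),
        (Nat.multinomial Finset.univ l : K) * ∏ j, E₁ (y j) (l j) :=
  complete_sum_products_hq_euler_polynomials_general K h q v y E₁ Ev hE₁ hEv
end
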